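/- Define Ψ̄(s,t) := (1/(m·U(s)·x(s)))·(m³U(s)²V(s)·cos θ(s,t) + ε₂·h·ρ(s)·sin θ(s,t), m³U(s)²V(s)·sin θ(s,t) − ε₂·h·ρ(s)·cos θ(s,t), ε₂·ρ(s)·x(s)). Then for all (s,t) ∈ J × ℝ: Ψ_s(s,t) = s^k·Ψ̄(s,t) and ‖Ψ̄(s,t)‖ = 1. Consequently, for every t ∈ ℝ: ∂_s^j Ψ(0,t) = 0 for all 1 ≤ j ≤ k, and ∂_s^{k+1} Ψ(0,t) = k!·Ψ̄(0,t) ≠ 0. -/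

import Mathlib

noncomputable section

open Real Topology
open scoped ContDiff

/-- Dot product on `ℝ³ = Fin 3 → ℝ`. -/
def dot3 (a b : Fin 3 → ℝ) : ℝ := a 0 * b 0 + a 1 * b 1 + a 2 * b 2

/-- Cross product on `ℝ³ = Fin 3 → ℝ`. -/
def cross3 (a b : Fin 3 → ℝ) : Fin 3 → ℝ :=
  ![a 1 * b 2 - a 2 * b 1, a 2 * b 0 - a 0 * b 2, a 0 * b 1 - a 1 * b 0]

/-- Euclidean norm on `ℝ³ = Fin 3 → ℝ`. -/
def norm3 (a : Fin 3 → ℝ) : ℝ := Real.sqrt (dot3 a a)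

/-- Determinant of the 3×3 matrix with columns `a`, `b`, `c`. -/
def det3 (a b c : Fin 3 → ℝ) : ℝ :=
  a 0 * (b 1 * c 2 - b 2 * c 1) - b 0 * (a 1 * c 2 - a 2 * c 1) + c 0 * (a 1 * b 2 - a 2 * b 1)

/-- `ρ(s) = √(m²U(s)² − h² − m⁴U(s)²V(s)²)`. -/
def rhoB (U V : ℝ → ℝ) (m h : ℝ) (s : ℝ) : ℝ :=
  Real.sqrt (m ^ 2 * U s ^ 2 - h ^ 2 - m ^ 4 * U s ^ 2 * V s ^ 2)

/-- `x(s) = ε₀ √(m²U(s)² − h²)`. -/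
def xB (U : ℝ → ℝ) (m h ε₀ : ℝ) (s : ℝ) : ℝ :=
  ε₀ * Real.sqrt (m ^ 2 * U s ^ 2 - h ^ 2)

/-- `z(s) = ε₂ m ∫₀^s ζ^k U(ζ) ρ(ζ)/(m²U(ζ)² − h²) dζ`. -/
def zB (U V : ℝ → ℝ) (k : ℕ) (m h ε₂ : ℝ) (s : ℝ) : ℝ :=
  ε₂ * m * ∫ ζ in (0:ℝ)..s, ζ ^ k * U ζ * rhoB U V m h ζ / (m ^ 2 * U ζ ^ 2 - h ^ 2)

/-- `θ(s,t) = (1/m)(ε₁ t − ε₂ h ∫₀^s ζ^k ρ(ζ)/(U(ζ)(m²U(ζ)² − h²)) dζ)`. -/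
def thetaB (U V : ℝ → ℝ) (k : ℕ) (m h ε₁ ε₂ : ℝ) (s t : ℝ) : ℝ :=
  (1 / m) * (ε₁ * t -
    ε₂ * h * ∫ ζ in (0:ℝ)..s, ζ ^ k * rhoB U V m h ζ / (U ζ * (m ^ 2 * U ζ ^ 2 - h ^ 2)))

/-- The generic helicoidal `(k+1)`-type edge
`Ψ(s,t) = (x(s) cos θ(s,t), x(s) sin θ(s,t), z(s) + h θ(s,t))` of Bour's representation. -/
def PsiB (U V : ℝ → ℝ) (k : ℕ) (m h ε₀ ε₁ ε₂ : ℝ) (s t : ℝ) : Fin 3 → ℝ :=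
  ![xB U m h ε₀ s * Real.cos (thetaB U V k m h ε₁ ε₂ s t),
    xB U m h ε₀ s * Real.sin (thetaB U V k m h ε₁ ε₂ s t),
    zB U V k m h ε₂ s + h * thetaB U V k m h ε₁ ε₂ s t]

/-- `Ψ̄(s,t)`, the unit vector with `Ψ_s = s^k Ψ̄`. -/
def PsibarB (U V : ℝ → ℝ) (k : ℕ) (m h ε₀ ε₁ ε₂ : ℝ) (s t : ℝ) : Fin 3 → ℝ :=
  (1 / (m * U s * xB U m h ε₀ s)) •
    ![m ^ 3 * U s ^ 2 * V s * Real.cos (thetaB U V k m h ε₁ ε₂ s t)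
        + ε₂ * h * rhoB U V m h s * Real.sin (thetaB U V k m h ε₁ ε₂ s t),
      m ^ 3 * U s ^ 2 * V s * Real.sin (thetaB U V k m h ε₁ ε₂ s t)
        - ε₂ * h * rhoB U V m h s * Real.cos (thetaB U V k m h ε₁ ε₂ s t),
      ε₂ * rhoB U V m h s * xB U m h ε₀ s]

lemma aux_vanish {E : Type*} [NormedAddCommGroup E] [NormedSpace ℝ E]
    (k : ℕ) (hk : 1 ≤ k) (J : Set ℝ) (hJo : IsOpen J) (hJ0 : (0:ℝ) ∈ J)
    (G B : ℝ → E) (hB : ContDiffOn ℝ ∞ B J)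
    (hG : ∀ s ∈ J, HasDerivAt G (s ^ k • B s) s) :
    (∀ j, 1 ≤ j → j ≤ k → iteratedDeriv j G 0 = 0) ∧
    iteratedDeriv (k+1) G 0 = (k.factorial : ℝ) • B 0 := by
  set H : ℝ → E := fun s => s ^ k • B s with hH
  have key : ∀ n, n ≤ k → ∃ C : ℝ → E, ContDiffOn ℝ ∞ C J ∧
      C 0 = (k.descFactorial n : ℝ) • B 0 ∧
      ∀ s ∈ J, iteratedDeriv n H s = s ^ (k - n) • C s := by
    intro n
    induction n with
    | zero =>
      intro _
      exact ⟨B, hB, by simp, fun s hs => by simp [hH]⟩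
    | succ n ih =>
      intro hn1
      obtain ⟨C, hC, hC0, hCeq⟩ := ih (Nat.le_of_succ_le hn1)
      have hnk : n < k := hn1
      refine ⟨fun u => ((k - n : ℕ) : ℝ) • C u + u • deriv C u, ?_, ?_, ?_⟩
      · have hdC : ContDiffOn ℝ ∞ (deriv C) J :=
          hC.deriv_of_isOpen hJo (by norm_num)
        exact (hC.const_smul _).add ((contDiffOn_id).smul hdC)
      · simp [hC0, Nat.descFactorial_succ, smul_smul, mul_comm]
      · intro s hs
        have hever : iteratedDeriv n H =ᶠ[𝓝 s] fun u => u ^ (k - n) • C u := by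
          filter_upwards [hJo.mem_nhds hs] with u hu using hCeq u hu
        have hder : HasDerivAt (fun u => u ^ (k - n) • C u)
            (s ^ (k - n) • deriv C s + (((k - n : ℕ) : ℝ) * s ^ (k - n - 1)) • C s) s := by
          have h1 : HasDerivAt (fun u : ℝ => u ^ (k - n)) (((k - n : ℕ) : ℝ) * s ^ (k - n - 1)) s :=
            hasDerivAt_pow _ _
          have h2 : HasDerivAt C (deriv C s) s :=
            ((hC.contDiffAt (hJo.mem_nhds hs)).differentiableAt (by norm_num)).hasDerivAt
          exact h1.smul h2
        have hkn : k - n = (k - (n+1)) + 1 := by omega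
        rw [iteratedDeriv_succ, hever.deriv_eq, hder.deriv, hkn]
        match_scalars <;> push_cast <;> ring
  have hGH : deriv G =ᶠ[𝓝 (0:ℝ)] H := by
    filter_upwards [hJo.mem_nhds hJ0] with u hu using (hG u hu).deriv
  constructor
  · intro j hj1 hjk
    obtain ⟨n, rfl⟩ : ∃ n, j = n + 1 := ⟨j - 1, by omega⟩
    obtain ⟨C, hC, hC0, hCeq⟩ := key n (by omega)
    rw [iteratedDeriv_succ', hGH.iteratedDeriv_eq n, hCeq 0 hJ0]
    have : k - n ≠ 0 := by omega
    simp [zero_pow this]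
  · obtain ⟨C, hC, hC0, hCeq⟩ := key k le_rfl
    rw [iteratedDeriv_succ', hGH.iteratedDeriv_eq k, hCeq 0 hJ0, Nat.sub_self, pow_zero, one_smul,
      hC0, Nat.descFactorial_self]


lemma ftc_aux (f : ℝ → ℝ) (J : Set ℝ) (hJo : IsOpen J) (hJc : Convex ℝ J) (hJ0 : (0:ℝ) ∈ J)
    (hf : ContDiffOn ℝ ∞ f J) :
    (∀ s ∈ J, HasDerivAt (fun u => ∫ ζ in (0:ℝ)..u, f ζ) (f s) s) ∧
    ContDiffOn ℝ ∞ (fun u => ∫ ζ in (0:ℝ)..u, f ζ) J := by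
  have hcont : ContinuousOn f J := hf.continuousOn
  have hder : ∀ s ∈ J, HasDerivAt (fun u => ∫ ζ in (0:ℝ)..u, f ζ) (f s) s := by
    intro s hs
    exact intervalIntegral.integral_hasDerivAt_right
      ((hcont.mono (hJc.ordConnected.uIcc_subset hJ0 hs)).intervalIntegrable)
      (hcont.stronglyMeasurableAtFilter hJo s hs)
      (hcont.continuousAt (hJo.mem_nhds hs))
  refine ⟨hder, (contDiffOn_infty_iff_deriv_of_isOpen hJo).2 ⟨?_, ?_⟩⟩
  · exact fun s hs => ((hder s hs).differentiableAt).differentiableWithinAt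
  · exact hf.congr fun s hs => (hder s hs).deriv

lemma core
    (k : ℕ)
    (J : Set ℝ) (hJo : IsOpen J) (hJc : Convex ℝ J) (hJ0 : (0:ℝ) ∈ J)
    (U V : ℝ → ℝ) (hU : ContDiff ℝ (⊤ : ℕ∞) U) (hV : ContDiff ℝ (⊤ : ℕ∞) V)
    (hUpos : ∀ s ∈ J, 0 < U s) (hU' : ∀ s ∈ J, deriv U s = s ^ k * V s)
    (m h : ℝ) (hm : 0 < m)
    (h1 : ∀ s ∈ J, 0 < m ^ 2 * U s ^ 2 - h ^ 2)
    (h2 : ∀ s ∈ J, 0 < m ^ 2 * U s ^ 2 - h ^ 2 - m ^ 4 * U s ^ 2 * V s ^ 2)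
    (ε₀ ε₁ ε₂ : ℝ) (he0 : ε₀ = 1 ∨ ε₀ = -1) (he1 : ε₁ = 1 ∨ ε₁ = -1)
    (he2 : ε₂ = 1 ∨ ε₂ = -1) :
    (∀ s ∈ J, ∀ t : ℝ,
      HasDerivAt (fun s' => PsiB U V k m h ε₀ ε₁ ε₂ s' t)
        (s ^ k • PsibarB U V k m h ε₀ ε₁ ε₂ s t) s)
    ∧ (∀ t : ℝ, ContDiffOn ℝ ∞ (fun s => PsibarB U V k m h ε₀ ε₁ ε₂ s t) J) := by
  have hε₀ : ε₀ ≠ 0 := by rcases he0 with rfl | rfl <;> norm_num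
  have hUsm : ContDiff ℝ ∞ U := hU.of_le (by simp)
  have hVsm : ContDiff ℝ ∞ V := hV.of_le (by simp)
  have hUd : ∀ s ∈ J, HasDerivAt U (s ^ k * V s) s := fun s hs => by
    have h0 := (hUsm.differentiable (by norm_num) s).hasDerivAt
    rwa [hU' s hs] at h0
  have hFsm : ContDiff ℝ ∞ (fun u => m ^ 2 * U u ^ 2 - h ^ 2) :=
    (contDiff_const.mul (hUsm.pow 2)).sub contDiff_const
  have hPsm : ContDiff ℝ ∞ (fun u => m ^ 2 * U u ^ 2 - h ^ 2 - m ^ 4 * U u ^ 2 * V u ^ 2) :=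
    hFsm.sub ((contDiff_const.mul (hUsm.pow 2)).mul (hVsm.pow 2))
  have hrhoAt : ∀ s ∈ J, ContDiffAt ℝ ∞ (rhoB U V m h) s := fun s hs => by
    have := (hPsm.contDiffAt (x := s)).sqrt (ne_of_gt (h2 s hs))
    exact this
  have hqAt : ∀ s ∈ J, ContDiffAt ℝ ∞ (fun u => Real.sqrt (m ^ 2 * U u ^ 2 - h ^ 2)) s :=
    fun s hs => (hFsm.contDiffAt (x := s)).sqrt (ne_of_gt (h1 s hs))
  have hq_pos : ∀ s ∈ J, 0 < Real.sqrt (m ^ 2 * U s ^ 2 - h ^ 2) :=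
    fun s hs => Real.sqrt_pos.2 (h1 s hs)
  have hq2 : ∀ s ∈ J, Real.sqrt (m ^ 2 * U s ^ 2 - h ^ 2) ^ 2 = m ^ 2 * U s ^ 2 - h ^ 2 :=
    fun s hs => Real.sq_sqrt (h1 s hs).le
  have hrho2 : ∀ s ∈ J, rhoB U V m h s ^ 2
      = m ^ 2 * U s ^ 2 - h ^ 2 - m ^ 4 * U s ^ 2 * V s ^ 2 :=
    fun s hs => Real.sq_sqrt (h2 s hs).le
  -- integrands
  have hfz : ContDiffOn ℝ ∞
      (fun ζ => ζ ^ k * U ζ * rhoB U V m h ζ / (m ^ 2 * U ζ ^ 2 - h ^ 2)) J := by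
    intro s hs
    exact (((((contDiff_id.pow k).contDiffAt).mul hUsm.contDiffAt).mul (hrhoAt s hs)).div
      hFsm.contDiffAt (ne_of_gt (h1 s hs))).contDiffWithinAt
  have hft : ContDiffOn ℝ ∞
      (fun ζ => ζ ^ k * rhoB U V m h ζ / (U ζ * (m ^ 2 * U ζ ^ 2 - h ^ 2))) J := by
    intro s hs
    exact ((((contDiff_id.pow k).contDiffAt).mul (hrhoAt s hs)).div
      (hUsm.contDiffAt.mul hFsm.contDiffAt)
      (mul_ne_zero (ne_of_gt (hUpos s hs)) (ne_of_gt (h1 s hs)))).contDiffWithinAt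
  obtain ⟨hIzd, hIzsm⟩ := ftc_aux _ J hJo hJc hJ0 hfz
  obtain ⟨hItd, hItsm⟩ := ftc_aux _ J hJo hJc hJ0 hft
  -- derivative of theta
  have hθd : ∀ s ∈ J, ∀ t : ℝ, HasDerivAt (fun u => thetaB U V k m h ε₁ ε₂ u t)
      ((1 / m) * -(ε₂ * h *
        (s ^ k * rhoB U V m h s / (U s * (m ^ 2 * U s ^ 2 - h ^ 2))))) s := by
    intro s hs t
    have h0 := (((hItd s hs).const_mul (ε₂ * h)).const_sub (ε₁ * t)).const_mul (1 / m)
    simp only [thetaB]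
    exact h0
  -- derivative of sqrt(F)
  have hqd : ∀ s ∈ J, HasDerivAt (fun u => Real.sqrt (m ^ 2 * U u ^ 2 - h ^ 2))
      (1 / (2 * Real.sqrt (m ^ 2 * U s ^ 2 - h ^ 2))
        * (m ^ 2 * ((2:ℕ) * U s ^ 1 * (s ^ k * V s)))) s := by
    intro s hs
    have hFd : HasDerivAt (fun u => m ^ 2 * U u ^ 2 - h ^ 2)
        (m ^ 2 * ((2:ℕ) * U s ^ 1 * (s ^ k * V s))) s :=
      (((hUd s hs).pow 2).const_mul (m ^ 2)).sub_const (h ^ 2)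
    have := (Real.hasDerivAt_sqrt (ne_of_gt (h1 s hs))).comp s hFd
    simpa [Function.comp_def] using this
  constructor
  · intro s hs t
    have hθ := hθd s hs t
    have hq := hqd s hs
    have hz : HasDerivAt (fun u => zB U V k m h ε₂ u)
        ((ε₂ * m) * (s ^ k * U s * rhoB U V m h s / (m ^ 2 * U s ^ 2 - h ^ 2))) s := by
      have h0 := (hIzd s hs).const_mul (ε₂ * m)
      simp only [zB]; exact h0
    apply hasDerivAt_pi.2
    intro i
    fin_cases i
    · simp only [PsiB, PsibarB, Fin.zero_eta, Matrix.cons_val_zero, Pi.smul_apply, smul_eq_mul, xB]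
      convert (hq.const_mul ε₀).mul hθ.cos using 1
      · rfl
      · rfl
      have hq2' := hq2 s hs
      have hUne := ne_of_gt (hUpos s hs)
      have hFne := ne_of_gt (h1 s hs)
      have hqne := ne_of_gt (hq_pos s hs)
      have hmne := ne_of_gt hm
      push_cast
      rcases he0 with rfl | rfl <;> field_simp
      · linear_combination (-s ^ k * h * ε₂ * rhoB U V m h s *
          Real.sin (thetaB U V k m h ε₁ ε₂ s t)) * hq2'
      · linear_combination (s ^ k * h * ε₂ * rhoB U V m h s *
          Real.sin (thetaB U V k m h ε₁ ε₂ s t)) * hq2'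
    · simp only [PsiB, PsibarB, Fin.mk_one, Matrix.cons_val_one, Matrix.head_cons, Pi.smul_apply,
        smul_eq_mul, xB]
      convert (hq.const_mul ε₀).mul hθ.sin using 1
      · rfl
      · rfl
      have hq2' := hq2 s hs
      have hUne := ne_of_gt (hUpos s hs)
      have hFne := ne_of_gt (h1 s hs)
      have hqne := ne_of_gt (hq_pos s hs)
      have hmne := ne_of_gt hm
      push_cast
      rcases he0 with rfl | rfl <;> field_simp
      · linear_combination (s ^ k * h * ε₂ * rhoB U V m h s *
          Real.cos (thetaB U V k m h ε₁ ε₂ s t)) * hq2'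
      · linear_combination (-s ^ k * h * ε₂ * rhoB U V m h s *
          Real.cos (thetaB U V k m h ε₁ ε₂ s t)) * hq2'
    · simp only [PsiB, PsibarB, Fin.reduceFinMk, Fin.isValue, Matrix.cons_val_two,
        Matrix.tail_cons, Matrix.head_cons, Pi.smul_apply, smul_eq_mul, xB]
      convert hz.add (hθ.const_mul h) using 1
      · rfl
      have hq2' := hq2 s hs
      have hUne := ne_of_gt (hUpos s hs)
      have hFne := ne_of_gt (h1 s hs)
      have hqne := ne_of_gt (hq_pos s hs)
      have hmne := ne_of_gt hm
      push_cast
      rcases he0 with rfl | rfl <;> field_simp <;> ring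
  · intro t s hs
    have hθsm : ContDiffAt ℝ ∞ (fun u => thetaB U V k m h ε₁ ε₂ u t) s := by
      simp only [thetaB]
      exact contDiffAt_const.mul (contDiffAt_const.sub
        (contDiffAt_const.mul (hItsm.contDiffAt (hJo.mem_nhds hs))))
    have hxAt : ContDiffAt ℝ ∞ (fun u => xB U m h ε₀ u) s := by
      simp only [xB]
      exact contDiffAt_const.mul (hqAt s hs)
    have hxne : xB U m h ε₀ s ≠ 0 := by
      simp only [xB]
      exact mul_ne_zero hε₀ (ne_of_gt (hq_pos s hs))
    have hinv : ContDiffAt ℝ ∞ (fun u => 1 / (m * U u * xB U m h ε₀ u)) s :=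
      contDiffAt_const.div ((contDiffAt_const.mul hUsm.contDiffAt).mul hxAt)
        (mul_ne_zero (mul_ne_zero (ne_of_gt hm) (ne_of_gt (hUpos s hs))) hxne)
    apply ContDiffAt.contDiffWithinAt
    refine contDiffAt_pi.2 fun i => ?_
    fin_cases i <;>
      simp only [PsibarB, Pi.smul_apply, smul_eq_mul, Fin.zero_eta, Fin.mk_one, Fin.reduceFinMk,
        Fin.isValue, Matrix.cons_val_zero, Matrix.cons_val_one, Matrix.head_cons,
        Matrix.cons_val_two, Matrix.tail_cons]
    · exact hinv.mul (((contDiffAt_const.mul (hUsm.contDiffAt.pow 2)).mul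
        hVsm.contDiffAt).mul hθsm.cos |>.add
        ((contDiffAt_const.mul (hrhoAt s hs)).mul hθsm.sin))
    · exact hinv.mul (((contDiffAt_const.mul (hUsm.contDiffAt.pow 2)).mul
        hVsm.contDiffAt).mul hθsm.sin |>.sub
        ((contDiffAt_const.mul (hrhoAt s hs)).mul hθsm.cos))
    · exact hinv.mul ((contDiffAt_const.mul (hrhoAt s hs)).mul hxAt)

lemma norm_aux
    (k : ℕ) (J : Set ℝ) (U V : ℝ → ℝ)
    (hUpos : ∀ s ∈ J, 0 < U s)
    (m h : ℝ) (hm : 0 < m)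
    (h1 : ∀ s ∈ J, 0 < m ^ 2 * U s ^ 2 - h ^ 2)
    (h2 : ∀ s ∈ J, 0 < m ^ 2 * U s ^ 2 - h ^ 2 - m ^ 4 * U s ^ 2 * V s ^ 2)
    (ε₀ ε₁ ε₂ : ℝ) (he0 : ε₀ = 1 ∨ ε₀ = -1) (he2 : ε₂ = 1 ∨ ε₂ = -1) :
    ∀ s ∈ J, ∀ t : ℝ, norm3 (PsibarB U V k m h ε₀ ε₁ ε₂ s t) = 1 := by
  intro s hs t
  have hq2' : Real.sqrt (m ^ 2 * U s ^ 2 - h ^ 2) ^ 2 = m ^ 2 * U s ^ 2 - h ^ 2 :=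
    Real.sq_sqrt (h1 s hs).le
  have hrho2' : rhoB U V m h s ^ 2 = m ^ 2 * U s ^ 2 - h ^ 2 - m ^ 4 * U s ^ 2 * V s ^ 2 :=
    Real.sq_sqrt (h2 s hs).le
  have hqne : Real.sqrt (m ^ 2 * U s ^ 2 - h ^ 2) ≠ 0 :=
    ne_of_gt (Real.sqrt_pos.2 (h1 s hs))
  have hUne := ne_of_gt (hUpos s hs)
  have hmne := ne_of_gt hm
  have hsc := Real.sin_sq_add_cos_sq (thetaB U V k m h ε₁ ε₂ s t)
  simp only [norm3, dot3, PsibarB, xB, Pi.smul_apply, smul_eq_mul, Matrix.cons_val_zero,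
    Matrix.cons_val_one, Matrix.head_cons, Matrix.cons_val_two, Matrix.tail_cons]
  rw [show (1 / (m * U s * (ε₀ * Real.sqrt (m ^ 2 * U s ^ 2 - h ^ 2))) *
        (m ^ 3 * U s ^ 2 * V s * Real.cos (thetaB U V k m h ε₁ ε₂ s t) +
          ε₂ * h * rhoB U V m h s * Real.sin (thetaB U V k m h ε₁ ε₂ s t))) *
      (1 / (m * U s * (ε₀ * Real.sqrt (m ^ 2 * U s ^ 2 - h ^ 2))) *
        (m ^ 3 * U s ^ 2 * V s * Real.cos (thetaB U V k m h ε₁ ε₂ s t) +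
          ε₂ * h * rhoB U V m h s * Real.sin (thetaB U V k m h ε₁ ε₂ s t))) +
      (1 / (m * U s * (ε₀ * Real.sqrt (m ^ 2 * U s ^ 2 - h ^ 2))) *
        (m ^ 3 * U s ^ 2 * V s * Real.sin (thetaB U V k m h ε₁ ε₂ s t) -
          ε₂ * h * rhoB U V m h s * Real.cos (thetaB U V k m h ε₁ ε₂ s t))) *
      (1 / (m * U s * (ε₀ * Real.sqrt (m ^ 2 * U s ^ 2 - h ^ 2))) *
        (m ^ 3 * U s ^ 2 * V s * Real.sin (thetaB U V k m h ε₁ ε₂ s t) -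
          ε₂ * h * rhoB U V m h s * Real.cos (thetaB U V k m h ε₁ ε₂ s t))) +
      (1 / (m * U s * (ε₀ * Real.sqrt (m ^ 2 * U s ^ 2 - h ^ 2))) *
        (ε₂ * rhoB U V m h s * (ε₀ * Real.sqrt (m ^ 2 * U s ^ 2 - h ^ 2)))) *
      (1 / (m * U s * (ε₀ * Real.sqrt (m ^ 2 * U s ^ 2 - h ^ 2))) *
        (ε₂ * rhoB U V m h s * (ε₀ * Real.sqrt (m ^ 2 * U s ^ 2 - h ^ 2)))) = 1 from ?_]
  · exact Real.sqrt_one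
  · rcases he0 with rfl | rfl <;> rcases he2 with rfl | rfl <;> field_simp <;>
      linear_combination (m ^ 6 * U s ^ 4 * V s ^ 2 + h ^ 2 * rhoB U V m h s ^ 2) * hsc +
        (rhoB U V m h s ^ 2 - m ^ 2 * U s ^ 2) * hq2' +
        (h ^ 2 + (m ^ 2 * U s ^ 2 - h ^ 2)) * hrho2'

/-- `Ψ_s(s,t) = s^k Ψ̄(s,t)` with `‖Ψ̄‖ = 1`; consequently `∂_s^j Ψ(0,t) = 0` for
`1 ≤ j ≤ k` and `∂_s^{k+1} Ψ(0,t) = k! Ψ̄(0,t) ≠ 0`. -/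
theorem stmt4
    (k : ℕ) (hk : 1 ≤ k)
    (J : Set ℝ) (hJo : IsOpen J) (hJc : Convex ℝ J) (hJ0 : (0:ℝ) ∈ J)
    (U V : ℝ → ℝ) (hU : ContDiff ℝ (⊤ : ℕ∞) U) (hV : ContDiff ℝ (⊤ : ℕ∞) V)
    (hUpos : ∀ s ∈ J, 0 < U s) (hU' : ∀ s ∈ J, deriv U s = s ^ k * V s)
    (m h : ℝ) (hm : 0 < m)
    (h1 : ∀ s ∈ J, 0 < m ^ 2 * U s ^ 2 - h ^ 2)
    (h2 : ∀ s ∈ J, 0 < m ^ 2 * U s ^ 2 - h ^ 2 - m ^ 4 * U s ^ 2 * V s ^ 2)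
    (ε₀ ε₁ ε₂ : ℝ) (he0 : ε₀ = 1 ∨ ε₀ = -1) (he1 : ε₁ = 1 ∨ ε₁ = -1)
    (he2 : ε₂ = 1 ∨ ε₂ = -1) :
    (∀ s ∈ J, ∀ t : ℝ,
      deriv (fun s' => PsiB U V k m h ε₀ ε₁ ε₂ s' t) s
          = s ^ k • PsibarB U V k m h ε₀ ε₁ ε₂ s t
      ∧ norm3 (PsibarB U V k m h ε₀ ε₁ ε₂ s t) = 1)
    ∧ (∀ t : ℝ,
        (∀ j : ℕ, 1 ≤ j → j ≤ k →
          iteratedDeriv j (fun s' => PsiB U V k m h ε₀ ε₁ ε₂ s' t) 0 = 0)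
        ∧ iteratedDeriv (k + 1) (fun s' => PsiB U V k m h ε₀ ε₁ ε₂ s' t) 0
            = (k.factorial : ℝ) • PsibarB U V k m h ε₀ ε₁ ε₂ 0 t
        ∧ (k.factorial : ℝ) • PsibarB U V k m h ε₀ ε₁ ε₂ 0 t ≠ 0) := by
  obtain ⟨hA, hB⟩ := core k J hJo hJc hJ0 U V hU hV hUpos hU' m h hm h1 h2 ε₀ ε₁ ε₂ he0 he1 he2
  have hN := norm_aux k J U V hUpos m h hm h1 h2 ε₀ ε₁ ε₂ he0 he2
  constructor
  · exact fun s hs t => ⟨(hA s hs t).deriv, hN s hs t⟩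
  · intro t
    obtain ⟨hvan, hk1⟩ := aux_vanish k hk J hJo hJ0 (fun s' => PsiB U V k m h ε₀ ε₁ ε₂ s' t)
      (fun s => PsibarB U V k m h ε₀ ε₁ ε₂ s t) (hB t) (fun s hs => hA s hs t)
    refine ⟨hvan, hk1, ?_⟩
    intro hc
    have hfac : (k.factorial : ℝ) ≠ 0 := Nat.cast_ne_zero.2 k.factorial_ne_zero
    have h0 : PsibarB U V k m h ε₀ ε₁ ε₂ 0 t = 0 := by
      rcases smul_eq_zero.1 hc with hbad | h0
      · exact absurd hbad hfac
      · exact h0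
    have h1' := hN 0 hJ0 t
    rw [h0] at h1'
    norm_num [norm3, dot3] at h1'


end
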